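/- arXiv:1008.4292 — 6 statements merged into one kernel-verified Lean document; each statement's English description precedes it below -/
import Mathlib

section
/- Let $V_0\supseteq V_1\supseteq\cdots\supseteq V_r$ and $W_0\supseteq W_1\supseteq\cdots\supseteq W_r$ be two descending chains of subspaces of a vector space $V$. Then $\bigcap_{i=0}^r (V_i + W_{r-i}) = V_r + W_r + \sum_{i=0}^{r-1} (V_i \cap W_{r-1-i})$. -/
/-!
The identity holds in every complete modular lattice. Induct on `r`, applying the case `r - 1`
to the shifted chain `V 1 ⊇ ⋯ ⊇ V r`: the new term `V 0 ⊔ W r` meets the old right-hand side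
`X ⊔ W (r - 1)`, where `X ≤ V 0`, and two applications of the modular law give
`(V 0 ⊔ W r) ⊓ (X ⊔ W (r - 1)) = X ⊔ W r ⊔ (V 0 ⊓ W (r - 1))`.
-/

section ModularLattice

variable {α : Type*}

lemma le_apply_zero_of_succ_le [Preorder α] {a : ℕ → α} {n : ℕ}
    (ha : ∀ i < n, a (i + 1) ≤ a i) {i : ℕ} (hi : i ≤ n) : a i ≤ a 0 := by
  induction i with
  | zero => exact le_rfl
  | succ i ih => exact (ha i (by omega)).trans (ih (by omega))

lemma sup_inf_sup_eq_of_le [Lattice α] [IsModularLattice α] {a a' b b' : α}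
    (ha : a' ≤ a) (hb : b' ≤ b) : (a ⊔ b') ⊓ (a' ⊔ b) = a' ⊔ b' ⊔ a ⊓ b := by
  rw [inf_comm, sup_inf_assoc_of_le b (ha.trans le_sup_left), inf_comm, sup_comm a,
    sup_inf_assoc_of_le a hb, sup_assoc]

theorem iInf_lt_succ_sup_sub_eq [CompleteLattice α] [IsModularLattice α] {r : ℕ} {a b : ℕ → α}
    (ha : ∀ i < r, a (i + 1) ≤ a i) (hb : ∀ i < r, b (i + 1) ≤ b i) :
    ⨅ i < r + 1, (a i ⊔ b (r - i)) = a r ⊔ b r ⊔ ⨆ i < r, (a i ⊓ b (r - 1 - i)) := by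
  induction r generalizing a with
  | zero => simp
  | succ r ih =>
    set S := ⨆ i < r, (a (i + 1) ⊓ b (r - 1 - i))
    have hshift : ⨅ i < r + 1, (a (i + 1) ⊔ b (r - i)) = a (r + 1) ⊔ b r ⊔ S :=
      ih (fun i hi => ha (i + 1) (by omega)) (fun i hi => hb i (by omega))
    have hX : a (r + 1) ⊔ S ≤ a 0 :=
      sup_le (le_apply_zero_of_succ_le ha le_rfl)
        (iSup₂_le fun i hi => inf_le_left.trans (le_apply_zero_of_succ_le ha (by omega)))
    have hS : ⨆ i < r, (a (i + 1) ⊓ b (r - (i + 1))) = S := by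
      simp only [S, Nat.sub_sub, Nat.add_comm 1]
    rw [Nat.iInf_lt_succ', Nat.iSup_lt_succ']
    simp only [Nat.add_sub_add_right, Nat.sub_zero, Nat.add_sub_cancel, hS]
    rw [hshift, sup_right_comm _ (b r), sup_inf_sup_eq_of_le hX (hb r (by omega))]
    ac_rfl

end ModularLattice

theorem stmt_0 {k M : Type*} [Field k] [AddCommGroup M] [Module k M]
    (r : ℕ) (V W : ℕ → Submodule k M)
    (hV : ∀ i, i < r → V (i + 1) ≤ V i) (hW : ∀ i, i < r → W (i + 1) ≤ W i) :
    (⨅ i ∈ Finset.range (r + 1), (V i ⊔ W (r - i))) =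
      V r ⊔ W r ⊔ ⨆ i ∈ Finset.range r, (V i ⊓ W (r - 1 - i)) := by
  simp only [Finset.mem_range]
  exact iInf_lt_succ_sup_sub_eq hV hW
end

section
/- Let $A$ be a UFD over a field $k$ of characteristic $0$, and let $\mathfrak{g}$ be a Lie algebra acting on $A$ by derivations. Then the monoid of nonzero elements $a \in A$ such that $Aa$ is $\mathfrak{g}$-stable, taken modulo units, is a free commutative monoid whose irreducible elements are (the classes of) the irreducible elements $a$ of $A$ such that $Aa$ is $\mathfrak{g}$-stable. -/
/-!
If `a = p ^ (n + 1) * c` with `p` prime, `p ∤ c` and `a ∣ D a` for a derivation `D`, then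
`D a = p ^ n * ((n + 1) * D p * c) + p ^ (n + 1) * D c`, so `p ∣ (n + 1) * D p * c`. In
characteristic zero `n + 1` is a unit, hence `p ∣ D p`. Thus every irreducible factor of a
stable element is stable, and uniqueness of the factorization is that of the UFD `A`.
-/

namespace Derivation

theorem dvd_natCast_mul_of_pow_succ_dvd_apply {R A : Type*} [CommSemiring R] [CommRing A]
    [IsDomain A] [Algebra R A] (D : Derivation R A A) {p c : A} {n : ℕ} (hp : p ≠ 0)
    (h : p ^ (n + 1) ∣ D (p ^ (n + 1) * c)) : p ∣ ((n + 1 : ℕ) : A) * D p * c := by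
  have hsplit : D (p ^ (n + 1) * c) =
      p ^ n * (((n + 1 : ℕ) : A) * D p * c) + p ^ (n + 1) * D c := by
    rw [leibniz, leibniz_pow]
    simp only [smul_eq_mul, nsmul_eq_mul, Nat.add_sub_cancel]
    ring
  rwa [hsplit, dvd_add_left (dvd_mul_right _ _), pow_succ,
    mul_dvd_mul_iff_left (pow_ne_zero _ hp)] at h

theorem dvd_apply_of_dvd_of_dvd_apply {k A : Type*} [Field k] [CharZero k] [CommRing A]
    [IsDomain A] [Algebra k A] [WfDvdMonoid A] (D : Derivation k A A) {a p : A}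
    (hp : Prime p) (hpa : p ∣ a) (ha : a ≠ 0) (h : a ∣ D a) : p ∣ D p := by
  obtain ⟨n, c, hpc, rfl⟩ := WfDvdMonoid.max_power_factor ha hp.irreducible
  obtain ⟨n, rfl⟩ : ∃ m, n = m + 1 := Nat.exists_eq_succ_of_ne_zero <| by
    rintro rfl
    exact hpc (by simpa using hpa)
  have hunit : IsUnit ((n + 1 : ℕ) : A) := by
    rw [← _root_.map_natCast (algebraMap k A)]
    exact (IsUnit.mk0 _ (Nat.cast_ne_zero.2 n.succ_ne_zero)).map _
  have hdvd := D.dvd_natCast_mul_of_pow_succ_dvd_apply hp.ne_zero ((dvd_mul_right _ _).trans h)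
  exact hunit.dvd_mul_left.mp ((hp.dvd_or_dvd hdvd).resolve_right hpc)

end Derivation

/-- The monoid of nonzero elements `a` with `Aa` stable under the Lie algebra action,
modulo units, is free commutative on the stable irreducible elements: every such
element factors as a unit times a product of stable irreducibles, uniquely up to
order and associates. -/
theorem stmt_8 {k A : Type*} [Field k] [CharZero k] [CommRing A] [IsDomain A]
    [Algebra k A] [UniqueFactorizationMonoid A]
    {L : Type*} [LieRing L] [LieAlgebra k L]
    (φ : L →ₗ⁅k⁆ Derivation k A A) :
    (∀ a : A, a ≠ 0 → (∀ x : L, φ x a ∈ Ideal.span {a}) →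
      ∃ (u : Aˣ) (f : Multiset A),
        (∀ b ∈ f, Irreducible b ∧ ∀ x : L, φ x b ∈ Ideal.span {b}) ∧
        a = (u : A) * f.prod) ∧
    (∀ (u v : Aˣ) (f g : Multiset A),
      (∀ b ∈ f, Irreducible b ∧ ∀ x : L, φ x b ∈ Ideal.span {b}) →
      (∀ b ∈ g, Irreducible b ∧ ∀ x : L, φ x b ∈ Ideal.span {b}) →
      (u : A) * f.prod = (v : A) * g.prod → Multiset.Rel Associated f g) := by
  constructor
  · intro a ha hstab
    obtain ⟨f, hf, u, hu⟩ := WfDvdMonoid.exists_factors a ha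
    refine ⟨u, f, fun b hb => ⟨hf b hb, fun x => ?_⟩, by rw [← hu, mul_comm]⟩
    have hba : b ∣ a := hu ▸ (Multiset.dvd_prod hb).mul_right _
    exact Ideal.mem_span_singleton.2 <| (φ x).dvd_apply_of_dvd_of_dvd_apply
      (UniqueFactorizationMonoid.irreducible_iff_prime.mp (hf b hb)) hba ha
      (Ideal.mem_span_singleton.1 (hstab x))
  · intro u v f g hf hg heq
    exact UniqueFactorizationMonoid.factors_unique (fun b hb => (hf b hb).1)
      (fun b hb => (hg b hb).1)
      (associated_unit_mul_right_iff.mp (associated_unit_mul_left_iff.mp (.of_eq heq)))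
end

section
/- Let $A$ be a UFD with a derivation $D$, and let $a \in A$ be nonzero with $D(a) \in Aa$. Then every irreducible factor $b$ of $a$ satisfies $D(b) \in Ab$. -/
/-!
Write `a = b ^ (n + 1) * c` with `b ∤ c`. By the Leibniz rule
`D a = b ^ n * ((n + 1) * D b * c + b * D c)`, so `b ^ (n + 1) ∣ D a` forces
`b ∣ (n + 1) * D b * c`; as `n + 1` is a unit and `b` is prime not dividing `c`, `b ∣ D b`.
-/

namespace Derivation

variable {R A : Type*} [CommSemiring R] [CommRing A] [Algebra R A] (D : Derivation R A A)

theorem apply_pow_succ_mul (b c : A) (n : ℕ) :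
    D (b ^ (n + 1) * c) = b ^ n * (((n + 1 : ℕ) : A) * D b * c + b * D c) := by
  rw [leibniz, leibniz_pow]
  simp only [Nat.add_sub_cancel, smul_eq_mul, nsmul_eq_mul]
  ring

theorem dvd_mul_of_pow_dvd_apply_pow_mul [IsDomain A] {b c : A} (hb : b ≠ 0) {n : ℕ}
    (h : b ^ (n + 1) ∣ D (b ^ (n + 1) * c)) : b ∣ ((n + 1 : ℕ) : A) * D b * c := by
  rw [apply_pow_succ_mul, pow_succ, mul_dvd_mul_iff_left (pow_ne_zero n hb)] at h
  exact (dvd_add_left (dvd_mul_right b _)).mp h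

theorem dvd_apply_of_pow_dvd_apply_pow_mul [IsDomain A] {b c : A} (hb : Prime b) (hc : ¬b ∣ c)
    {n : ℕ} (hn : IsUnit ((n + 1 : ℕ) : A)) (h : b ^ (n + 1) ∣ D (b ^ (n + 1) * c)) :
    b ∣ D b := by
  have hdvd := D.dvd_mul_of_pow_dvd_apply_pow_mul hb.ne_zero h
  rw [mul_assoc, hn.dvd_mul_left] at hdvd
  exact (hb.dvd_or_dvd hdvd).resolve_right hc

end Derivation

theorem isUnit_natCast_of_algebra_rat {A : Type*} [Ring A] [Algebra ℚ A] {n : ℕ} (hn : n ≠ 0) :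
    IsUnit (n : A) := by
  simpa using (isUnit_iff_ne_zero.mpr (Nat.cast_ne_zero.mpr hn : (n : ℚ) ≠ 0)).map (algebraMap ℚ A)

theorem stmt_9 {A : Type*} [CommRing A] [IsDomain A] [UniqueFactorizationMonoid A]
    [Algebra ℚ A] (D : Derivation ℚ A A) (a : A) (ha : a ≠ 0)
    (hstab : D a ∈ Ideal.span {a}) (b : A) (hb : Irreducible b) (hba : b ∣ a) :
    D b ∈ Ideal.span {b} := by
  rw [Ideal.mem_span_singleton] at hstab ⊢
  obtain ⟨k, c, hc, rfl⟩ := WfDvdMonoid.max_power_factor ha hb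
  obtain ⟨n, rfl⟩ : ∃ n, k = n + 1 :=
    Nat.exists_eq_add_one.mpr (Nat.pos_of_ne_zero fun hk => hc (by simpa [hk] using hba))
  exact D.dvd_apply_of_pow_dvd_apply_pow_mul hb.prime hc
    (isUnit_natCast_of_algebra_rat n.succ_ne_zero) ((dvd_mul_right _ _).trans hstab)
end

section
/- Let $A$ be a commutative domain with a derivation $D$ and suppose $A$ has a filtration $A_0 \subseteq A_1 \subseteq \cdots$ by subspaces with $A_0 = k$ (the base field), $A = \bigcup_n A_n$, $A_m A_n \subseteq A_{m+n}$, $D(A_n) \subseteq A_n$, and such that the associated graded ring $\mathrm{gr}\,A$ is a domain. If $a \in A$ is nonzero and $D(a) \in Aa$, then $D(a) = \lambda a$ for some $\lambda \in k$. -/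
/-!
Measure elements of `A` by their filtration degree. A scalar `a` is killed by `D`. Otherwise
let `a` have exact degree `n + 1` and write `D a = b * a`. Since `D` does not raise degree,
`b * a` has degree at most `n + 1`; as `gr A` is a domain, degrees add on products, so `b` has
degree `0`, i.e. `b` is a scalar.
-/

theorem mem_zero_of_mul_mem_of_mem_succ_of_notMem {k A : Type*} [CommRing k] [Ring A]
    [Algebra k A] {F : ℕ → Submodule k A} (hmono : Monotone F)
    (hunion : ∀ x : A, ∃ n, x ∈ F n)
    (hgr : ∀ m n : ℕ, ∀ x y : A, x ∈ F (m + 1) → y ∈ F (n + 1) →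
      x * y ∈ F (m + n + 1) → x ∈ F m ∨ y ∈ F n)
    {a b : A} {n : ℕ} (ha : a ∈ F (n + 1)) (ha' : a ∉ F n) (hba : b * a ∈ F (n + 1)) :
    b ∈ F 0 := by
  by_contra hb0
  obtain ⟨m, hbm, hbm1⟩ := Nat.exists_not_and_succ_of_not_zero_of_exists hb0 (hunion b)
  have hba' : b * a ∈ F (m + n + 1) := hmono (by omega) hba
  exact (hgr m n b a hbm1 ha hba').elim hbm ha'

theorem Derivation.map_eq_zero_of_mem_one {k A M : Type*} [CommRing k] [CommRing A]
    [Algebra k A] [AddCommMonoid M] [Module A M] [Module k M] [IsScalarTower k A M]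
    (D : Derivation k A M) {x : A} (hx : x ∈ (1 : Submodule k A)) : D x = 0 := by
  obtain ⟨c, rfl⟩ := Submodule.mem_one.mp hx
  exact D.map_algebraMap c

theorem stmt_10_general {k A : Type*} [Field k] [CommRing A] [Algebra k A]
    (F : ℕ → Submodule k A) (hF0 : F 0 = 1) (hmono : Monotone F)
    (hunion : ∀ a : A, ∃ n, a ∈ F n)
    (D : Derivation k A A) (hD : ∀ n : ℕ, ∀ x ∈ F n, D x ∈ F n)
    (hgr : ∀ m n : ℕ, ∀ x y : A, x ∈ F (m + 1) → y ∈ F (n + 1) →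
      x * y ∈ F (m + n + 1) → x ∈ F m ∨ y ∈ F n)
    (a : A) (hstab : D a ∈ Ideal.span {a}) :
    ∃ lam : k, D a = algebraMap k A lam * a := by
  by_cases ha0 : a ∈ F 0
  · refine ⟨0, ?_⟩
    rw [D.map_eq_zero_of_mem_one (hF0 ▸ ha0), map_zero, zero_mul]
  obtain ⟨n, ha', ha⟩ := Nat.exists_not_and_succ_of_not_zero_of_exists ha0 (hunion a)
  obtain ⟨b, hb⟩ := Ideal.mem_span_singleton'.mp hstab
  have hb0 : b ∈ F 0 :=
    mem_zero_of_mul_mem_of_mem_succ_of_notMem hmono hunion hgr ha ha' (hb ▸ hD _ a ha)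
  obtain ⟨lam, rfl⟩ := Submodule.mem_one.mp (hF0 ▸ hb0)
  exact ⟨lam, hb.symm⟩

theorem stmt_10 {k A : Type*} [Field k] [CommRing A] [IsDomain A] [Algebra k A]
    (F : ℕ → Submodule k A) (hF0 : F 0 = 1) (hmono : Monotone F)
    (hunion : ∀ a : A, ∃ n, a ∈ F n)
    (hmul : ∀ m n : ℕ, ∀ x ∈ F m, ∀ y ∈ F n, x * y ∈ F (m + n))
    (D : Derivation k A A) (hD : ∀ n : ℕ, ∀ x ∈ F n, D x ∈ F n)
    (hgr : ∀ m n : ℕ, ∀ x y : A, x ∈ F (m + 1) → y ∈ F (n + 1) →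
      x * y ∈ F (m + n + 1) → x ∈ F m ∨ y ∈ F n)
    (a : A) (ha : a ≠ 0) (hstab : D a ∈ Ideal.span {a}) :
    ∃ lam : k, D a = algebraMap k A lam * a :=
  stmt_10_general F hF0 hmono hunion D hD hgr a hstab
end

section
/- The ring $\mathbb{R}[a,b]/(a^2+b^2-1)$ is not a unique factorization domain. -/
/-!
Write `x, y` for the classes of `X 0, X 1`. The coordinate ring is the quadratic algebra
`ℝ[x][y]` with `y² = 1 - x²`, and the norm `p² + (x² - 1) q²` of a nonzero element `p + q y` has
positive leading coefficient and even degree, since the leading terms of the two summands cannot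
cancel. Hence the ring is a domain, and `y`, of norm `x² - 1`, is irreducible: in a factorization
the degrees of the norms are even and add up to `2`, so one factor has constant norm and is a
unit. But `y` divides `(1 - x)(1 + x) = y²` and neither factor, so `y` is not prime.
-/

open Polynomial QuadraticAlgebra

namespace QuadraticAlgebra

variable {R : Type*} [CommRing R] {a b : R}

theorem omega_dvd_iff {z : QuadraticAlgebra R a b} : ω ∣ z ↔ a ∣ z.re := by
  constructor
  · rintro ⟨w, rfl⟩
    exact ⟨w.im, by simp⟩
  · rintro ⟨s, hs⟩
    refine ⟨⟨z.im - b * s, s⟩, ?_⟩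
    ext <;> simp [hs]

theorem norm_omega : norm (ω : QuadraticAlgebra R a b) = -a := by
  simp [norm_def]

theorem isDomain_of_norm_ne_zero [IsDomain R]
    (h : ∀ z : QuadraticAlgebra R a b, z ≠ 0 → norm z ≠ 0) : IsDomain (QuadraticAlgebra R a b) :=
  have : NoZeroDivisors (QuadraticAlgebra R a b) := ⟨fun {z w} hzw => by
    by_contra! hne
    exact mul_ne_zero (h z hne.1) (h w hne.2) (by rw [← map_mul, hzw, norm_zero])⟩
  NoZeroDivisors.to_isDomain _

end QuadraticAlgebra

namespace Polynomial

variable {K : Type*} [CommRing K] [LinearOrder K]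

def PosEven (u : K[X]) : Prop := 0 < u.leadingCoeff ∧ Even u.natDegree

theorem PosEven.ne_zero {u : K[X]} (hu : PosEven u) : u ≠ 0 :=
  leadingCoeff_ne_zero.mp hu.1.ne'

variable [IsStrictOrderedRing K]

theorem PosEven.add {u v : K[X]} (hu : PosEven u) (hv : PosEven v) : PosEven (u + v) := by
  rcases lt_trichotomy u.degree v.degree with h | h | h
  · rwa [PosEven, leadingCoeff_add_of_degree_lt h, natDegree_add_eq_right_of_degree_lt h]
  · have hlc : u.leadingCoeff + v.leadingCoeff ≠ 0 := (add_pos hu.1 hv.1).ne'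
    have hdeg : (u + v).degree = v.degree := by
      rw [degree_add_eq_of_leadingCoeff_add_ne_zero hlc, h, max_self]
    rw [PosEven, leadingCoeff_add_of_degree_eq h hlc, natDegree_eq_of_degree_eq hdeg]
    exact ⟨add_pos hu.1 hv.1, hv.2⟩
  · rwa [PosEven, leadingCoeff_add_of_degree_lt' h, natDegree_add_eq_left_of_degree_lt h]

theorem PosEven.mul {u v : K[X]} (hu : PosEven u) (hv : PosEven v) : PosEven (u * v) := by
  refine ⟨by rw [leadingCoeff_mul]; exact mul_pos hu.1 hv.1, ?_⟩
  rw [natDegree_mul hu.ne_zero hv.ne_zero]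
  exact hu.2.add hv.2

theorem posEven_mul_self {p : K[X]} (hp : p ≠ 0) : PosEven (p * p) :=
  ⟨by rw [leadingCoeff_mul]; exact mul_self_pos.mpr (leadingCoeff_ne_zero.mpr hp),
    by rw [natDegree_mul hp hp]; exact ⟨_, rfl⟩⟩

end Polynomial

abbrev CircleAlgebra (R : Type*) [CommRing R] : Type _ := QuadraticAlgebra R[X] (1 - X ^ 2) 0

namespace CircleAlgebra

section CommRing

variable (R : Type*) [CommRing R]

noncomputable abbrev circleIdeal : Ideal (MvPolynomial (Fin 2) R) :=
  Ideal.span {MvPolynomial.X 0 ^ 2 + MvPolynomial.X 1 ^ 2 - 1}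

theorem omega_sq : (ω : CircleAlgebra R) ^ 2 = algebraMap R[X] _ (1 - X ^ 2) := by
  rw [sq (ω : CircleAlgebra R), omega_mul_omega_eq_algebraMap, map_zero, zero_mul, add_zero]

theorem mk_X_zero_sq_add_mk_X_one_sq :
    Ideal.Quotient.mk (circleIdeal R) (MvPolynomial.X 0) ^ 2 +
      Ideal.Quotient.mk (circleIdeal R) (MvPolynomial.X 1) ^ 2 = 1 := by
  rw [← sub_eq_zero, ← map_pow, ← map_pow, ← map_add, ← map_one (Ideal.Quotient.mk _), ← map_sub,
    Ideal.Quotient.eq_zero_iff_mem]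
  exact Ideal.subset_span rfl

noncomputable def ofCoordinateRing : MvPolynomial (Fin 2) R ⧸ circleIdeal R →ₐ[R] CircleAlgebra R :=
  Ideal.Quotient.liftₐ _ (MvPolynomial.aeval ![algebraMap R[X] _ X, ω]) fun p hp => by
    obtain ⟨c, rfl⟩ := Ideal.mem_span_singleton'.mp hp
    have hrel : algebraMap R[X] (CircleAlgebra R) X ^ 2 + ω ^ 2 - 1 = 0 := by
      rw [omega_sq, ← map_pow, ← map_add, add_sub_cancel, map_one, sub_self]
    simp [hrel]

theorem ofCoordinateRing_mk (p : MvPolynomial (Fin 2) R) :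
    ofCoordinateRing R (Ideal.Quotient.mk _ p) =
      MvPolynomial.aeval ![algebraMap R[X] (CircleAlgebra R) X, ω] p :=
  rfl

noncomputable def toCoordinateRing : CircleAlgebra R →+* MvPolynomial (Fin 2) R ⧸ circleIdeal R :=
  letI : Algebra R[X] (MvPolynomial (Fin 2) R ⧸ circleIdeal R) :=
    (aeval (Ideal.Quotient.mk _ (MvPolynomial.X 0))).toAlgebra
  (QuadraticAlgebra.lift ⟨Ideal.Quotient.mk _ (MvPolynomial.X 1), by
    simp only [Algebra.smul_def, RingHom.algebraMap_toAlgebra, AlgHom.toRingHom_eq_coe,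
      RingHom.coe_coe, map_sub, map_one, map_pow, aeval_X, map_zero]
    linear_combination mk_X_zero_sq_add_mk_X_one_sq R⟩).toRingHom

theorem toCoordinateRing_apply (z : CircleAlgebra R) :
    toCoordinateRing R z =
      aeval (Ideal.Quotient.mk (circleIdeal R) (MvPolynomial.X 0)) z.re +
        aeval (Ideal.Quotient.mk (circleIdeal R) (MvPolynomial.X 0)) z.im *
          Ideal.Quotient.mk (circleIdeal R) (MvPolynomial.X 1) := by
  simp [toCoordinateRing, Algebra.smul_def, RingHom.algebraMap_toAlgebra]

noncomputable def coordinateRingEquiv :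
    MvPolynomial (Fin 2) R ⧸ circleIdeal R ≃+* CircleAlgebra R :=
  RingEquiv.ofRingHom (ofCoordinateRing R) (toCoordinateRing R)
    (by
      refine RingHom.ext fun z => ?_
      simp only [RingHom.coe_comp, Function.comp_apply, toCoordinateRing_apply,
        AlgHom.coe_toRingHom, map_add, map_mul, ← aeval_algHom_apply, ofCoordinateRing_mk,
        MvPolynomial.aeval_X, Matrix.cons_val_zero, Matrix.cons_val_one, Matrix.cons_val_fin_one,
        aeval_algebraMap_apply, aeval_X_left, AlgHom.coe_id, id_eq, RingHom.id_apply]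
      ext <;> simp)
    (by
      refine Ideal.Quotient.ringHom_ext (MvPolynomial.ringHom_ext (fun r => ?_) (fun i => ?_))
      · simp [toCoordinateRing_apply, ofCoordinateRing_mk, IsScalarTower.algebraMap_apply R R[X],
          ← Ideal.Quotient.mk_algebraMap]
      · fin_cases i <;> simp [toCoordinateRing_apply, ofCoordinateRing_mk])

theorem norm_eq (z : CircleAlgebra R) :
    norm z = z.re * z.re + (X ^ 2 - 1) * (z.im * z.im) := by
  rw [norm_def]; ring

theorem natDegree_X_sq_sub_one [Nontrivial R] : (X ^ 2 - 1 : R[X]).natDegree = 2 := by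
  rw [← C_1, natDegree_X_pow_sub_C]

end CommRing

section OrderedRing

variable {K : Type*} [CommRing K] [LinearOrder K] [IsStrictOrderedRing K]

theorem posEven_X_sq_sub_one : PosEven (X ^ 2 - 1 : K[X]) := by
  refine ⟨?_, by rw [natDegree_X_sq_sub_one]; exact even_two⟩
  rw [← C_1, (monic_X_pow_sub_C (1 : K) two_ne_zero).leadingCoeff]
  exact one_pos

theorem posEven_norm {z : CircleAlgebra K} (hz : z ≠ 0) : PosEven (norm z) := by
  rw [norm_eq]
  by_cases him : z.im = 0
  · have hre : z.re ≠ 0 := fun hre => hz (QuadraticAlgebra.ext hre him)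
    simpa [him] using posEven_mul_self hre
  have hsnd := posEven_X_sq_sub_one.mul (posEven_mul_self him)
  by_cases hre : z.re = 0
  · simpa [hre] using hsnd
  · exact (posEven_mul_self hre).add hsnd

instance : IsDomain (CircleAlgebra K) :=
  isDomain_of_norm_ne_zero fun _ hz => (posEven_norm hz).ne_zero

theorem not_omega_dvd_algebraMap_X_sub_C {c : K} (hc : c ^ 2 = 1) :
    ¬ (ω : CircleAlgebra K) ∣ algebraMap K[X] _ (X - C c) := by
  rw [omega_dvd_iff, algebraMap_re]
  intro h
  have := eval_dvd (x := -c) h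
  simp only [eval_sub, eval_one, eval_pow, eval_X, eval_C, neg_sq, hc, sub_self,
    zero_dvd_iff] at this
  nlinarith

theorem not_prime_omega : ¬ Prime (ω : CircleAlgebra K) := by
  intro h
  have hdvd : (ω : CircleAlgebra K) ∣
      algebraMap K[X] _ (X - C 1) * algebraMap K[X] _ (X - C (-1)) := by
    rw [← map_mul, omega_dvd_iff, algebraMap_re]
    exact ⟨-1, by simp only [map_one, map_neg]; ring⟩
  rcases h.dvd_or_dvd hdvd with h | h
  · exact not_omega_dvd_algebraMap_X_sub_C (one_pow 2) h
  · exact not_omega_dvd_algebraMap_X_sub_C (by norm_num) h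

end OrderedRing

section OrderedField

variable {K : Type*} [Field K] [LinearOrder K] [IsStrictOrderedRing K]

theorem isUnit_iff_natDegree_norm_eq_zero {z : CircleAlgebra K} (hz : z ≠ 0) :
    IsUnit z ↔ (norm z).natDegree = 0 := by
  rw [isUnit_iff_norm_isUnit, isUnit_iff_degree_eq_zero]
  exact degree_eq_iff_natDegree_eq (posEven_norm hz).ne_zero

theorem irreducible_omega : Irreducible (ω : CircleAlgebra K) := by
  have hnorm : norm (ω : CircleAlgebra K) = X ^ 2 - 1 := by rw [norm_omega]; ring
  have hω : (ω : CircleAlgebra K) ≠ 0 := fun h => by simpa using congrArg QuadraticAlgebra.im h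
  refine irreducible_iff.mpr ⟨?_, fun u v huv => ?_⟩
  · rw [isUnit_iff_natDegree_norm_eq_zero hω, hnorm, natDegree_X_sq_sub_one]
    exact two_ne_zero
  have hu : u ≠ 0 := by rintro rfl; exact hω (by simp [huv])
  have hv : v ≠ 0 := by rintro rfl; exact hω (by simp [huv])
  have hdeg : (norm u).natDegree + (norm v).natDegree = 2 := by
    rw [← natDegree_mul (posEven_norm hu).ne_zero (posEven_norm hv).ne_zero, ← map_mul, ← huv,
      hnorm, natDegree_X_sq_sub_one]
  rw [isUnit_iff_natDegree_norm_eq_zero hu, isUnit_iff_natDegree_norm_eq_zero hv]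
  obtain ⟨m, hm⟩ := (posEven_norm hu).2
  obtain ⟨n, hn⟩ := (posEven_norm hv).2
  omega

theorem not_uniqueFactorizationMonoid : ¬ UniqueFactorizationMonoid (CircleAlgebra K) :=
  fun _ => not_prime_omega (irreducible_omega (K := K)).prime

end OrderedField

end CircleAlgebra

theorem stmt_11 :
    ∃ hd : IsDomain (MvPolynomial (Fin 2) ℝ ⧸
        Ideal.span {(MvPolynomial.X 0 : MvPolynomial (Fin 2) ℝ) ^ 2 +
          MvPolynomial.X 1 ^ 2 - 1}),
      ¬ (letI := hd;
        UniqueFactorizationMonoid (MvPolynomial (Fin 2) ℝ ⧸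
          Ideal.span {(MvPolynomial.X 0 : MvPolynomial (Fin 2) ℝ) ^ 2 +
            MvPolynomial.X 1 ^ 2 - 1})) := by
  let e := (CircleAlgebra.coordinateRingEquiv ℝ).toMulEquiv
  exact ⟨e.isDomain _, fun hufd =>
    CircleAlgebra.not_uniqueFactorizationMonoid (e.uniqueFactorizationMonoid hufd)⟩
end

section
/- Let $A$ be a UFD of characteristic $p > 0$, let $\mathfrak{g}$ be a restricted Lie algebra (or any Lie algebra) acting on $A$ by derivations, and let $a \in A$ be nonzero with $Aa$ being $\mathfrak{g}$-stable. Write the factorization of $a$ into irreducibles. If an irreducible element $b$ occurs with multiplicity $t$ in $a$ and $t = p^r t_1$ with $p \nmid t_1$, then $A b^{p^r}$ is $\mathfrak{g}$-stable, i.e. $D(b^{p^r}) \in A b^{p^r}$ for all derivations $D$ from $\mathfrak{g}$. -/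
theorem isUnit_natCast_of_not_dvd (k : Type*) {A : Type*} [Field k] [Semiring A] [Algebra k A]
    (p : ℕ) [CharP k p] {n : ℕ} (hn : ¬ p ∣ n) : IsUnit (n : A) := by
  have hk : (n : k) ≠ 0 := by rwa [Ne, CharP.cast_eq_zero_iff k p]
  simpa only [map_natCast] using (isUnit_iff_ne_zero.mpr hk).map (algebraMap k A)

namespace Derivation

variable {R A : Type*} [CommSemiring R] [CommRing A] [IsDomain A] [Algebra R A]
  (D : Derivation R A A)

/-- Writing `a = b ^ t * c` with `b ∤ c`, the Leibniz rule gives `b ^ t ∣ D (b ^ t) * c`. -/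
theorem pow_dvd_apply_pow_of_dvd_apply {a b : A} (hb : Prime b) {t : ℕ}
    (hbt : b ^ t ∣ a) (hbt' : ¬ b ^ (t + 1) ∣ a) (ha : a ∣ D a) : b ^ t ∣ D (b ^ t) := by
  obtain ⟨c, rfl⟩ := hbt
  have hbc : ¬ b ∣ c := by
    rintro ⟨d, rfl⟩
    exact hbt' ⟨d, by ring⟩
  have hleibniz : D (b ^ t) * c = D (b ^ t * c) - b ^ t * D c := by
    rw [D.leibniz, smul_eq_mul, smul_eq_mul]
    ring
  refine hb.pow_dvd_of_dvd_mul_right t hbc ?_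
  rw [hleibniz]
  exact dvd_sub ((dvd_mul_right _ _).trans ha) (dvd_mul_right _ _)

theorem dvd_apply_of_pow_dvd_apply_pow {y : A} {n : ℕ} (hn : IsUnit (n : A))
    (hy : y ^ n ∣ D (y ^ n)) : y ∣ D y := by
  rcases eq_or_ne y 0 with rfl | hy0
  · simp
  have hn0 : n ≠ 0 := by
    rintro rfl
    exact not_isUnit_zero (M₀ := A) (by simpa only [Nat.cast_zero] using hn)
  have hsucc : y ^ (n - 1) * y = y ^ n := by rw [← pow_succ, Nat.sub_add_cancel (by omega)]
  rw [D.leibniz_pow, smul_eq_mul, nsmul_eq_mul, hn.dvd_mul_left, ← hsucc] at hy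
  exact (mul_dvd_mul_iff_left (pow_ne_zero _ hy0)).mp hy

end Derivation

theorem stmt_14_general {k A : Type*} [Field k] [CommRing A] [IsDomain A] [Algebra k A]
    [UniqueFactorizationMonoid A] (p : ℕ) [CharP k p]
    {L : Type*} [LieRing L] [LieAlgebra k L]
    (φ : L →ₗ⁅k⁆ Derivation k A A)
    (a : A) (hstab : ∀ x : L, φ x a ∈ Ideal.span {a})
    (b : A) (hb : Irreducible b) (t r t₁ : ℕ)
    (hmult : b ^ t ∣ a ∧ ¬ b ^ (t + 1) ∣ a)
    (ht : t = p ^ r * t₁) (ht₁ : ¬ p ∣ t₁) :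
    ∀ x : L, φ x (b ^ p ^ r) ∈ Ideal.span {b ^ p ^ r} := by
  intro x
  have hbt : b ^ t ∣ φ x (b ^ t) :=
    (φ x).pow_dvd_apply_pow_of_dvd_apply (UniqueFactorizationMonoid.irreducible_iff_prime.mp hb)
      hmult.1 hmult.2 (Ideal.mem_span_singleton.mp (hstab x))
  rw [ht, pow_mul] at hbt
  exact Ideal.mem_span_singleton.mpr
    ((φ x).dvd_apply_of_pow_dvd_apply_pow (isUnit_natCast_of_not_dvd k p ht₁) hbt)

theorem stmt_14 {k A : Type*} [Field k] [CommRing A] [IsDomain A] [Algebra k A]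
    [UniqueFactorizationMonoid A] (p : ℕ) [Fact p.Prime] [CharP k p] [CharP A p]
    {L : Type*} [LieRing L] [LieAlgebra k L]
    (φ : L →ₗ⁅k⁆ Derivation k A A)
    (a : A) (ha : a ≠ 0) (hstab : ∀ x : L, φ x a ∈ Ideal.span {a})
    (b : A) (hb : Irreducible b) (t r t₁ : ℕ)
    (hmult : b ^ t ∣ a ∧ ¬ b ^ (t + 1) ∣ a)
    (ht : t = p ^ r * t₁) (ht₁ : ¬ p ∣ t₁) :
    ∀ x : L, φ x (b ^ p ^ r) ∈ Ideal.span {b ^ p ^ r} :=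
  stmt_14_general p φ a hstab b hb t r t₁ hmult ht ht₁
end
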